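/- Let q be odd, χ a nontrivial character of (F_q,+), and ρ an irreducible complex representation of H(W), W = F_q^{2n}, with central character χ. For every Lagrangian subspace L ⊆ W (an n-dimensional subspace on which the symplectic form vanishes identically), the space of vectors v with ρ(l,0)v = v for all l ∈ L is exactly one-dimensional. -/

import Mathlib

/-!
Since `2` is invertible, conjugating `(w, 0)` by `(u, 0)` multiplies it by the central element
`(0, ⟨u, w⟩)`, which acts by `χ ⟨u, w⟩`. As `χ` is nontrivial and the form nondegenerate, some
such scalar differs from `1`, so `ρ(w, 0)` is traceless for `w ≠ 0`. Hence the averaging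
projector `P` of the abelian group `L` has trace `dim V / |L| ≠ 0`, and its image, the
`L`-fixed space, is nonzero. Fix `v₀ ≠ 0` in it and let `g = (w, t)`. If `w ∈ L` then
`ρ g v₀ = χ t • v₀`. If `w ∉ L`, then, as `L = L^⊥`, some `l ∈ L` has `χ ⟨l, w⟩ ≠ 1`, and
`P ρ(l, 0) = P` together with the commutation rule forces `P (ρ g v₀) = 0`. By irreducibility
the vectors `ρ g v₀` span `V`, so the image of `P` is the line through `v₀`.
-/

open Matrix

set_option linter.unusedSectionVars false

namespace Stmt3

/-- The standard symplectic form on `W = F^n × F^n`: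
`⟨(x,y),(x',y')⟩ = x·y' − y·x'`. -/
def symp {F : Type} [Field F] {n : ℕ} (u v : (Fin n → F) × (Fin n → F)) : F :=
  u.1 ⬝ᵥ v.2 - u.2 ⬝ᵥ v.1

/-- The Heisenberg group `H(W) = W ⊕ F` attached to `W = F^n × F^n`, with
product `(w,t)·(w',t') = (w + w', t + t' + ½⟨w,w'⟩)`. -/
@[ext]
structure Heis (F : Type) [Field F] (n : ℕ) where
  w : (Fin n → F) × (Fin n → F)
  t : F

namespace Heis

variable {F : Type} [Field F] {n : ℕ}

instance : Mul (Heis F n) :=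
  ⟨fun a b => ⟨a.w + b.w, a.t + b.t + (2 : F)⁻¹ * symp a.w b.w⟩⟩

instance : One (Heis F n) := ⟨⟨0, 0⟩⟩

instance : Inv (Heis F n) := ⟨fun a => ⟨-a.w, -a.t⟩⟩

lemma mul_w (a b : Heis F n) : (a * b).w = a.w + b.w := rfl
lemma mul_t (a b : Heis F n) : (a * b).t = a.t + b.t + (2 : F)⁻¹ * symp a.w b.w := rfl
lemma one_w : (1 : Heis F n).w = 0 := rfl
lemma one_t : (1 : Heis F n).t = 0 := rfl
lemma inv_w (a : Heis F n) : (a⁻¹).w = -a.w := rfl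
lemma inv_t (a : Heis F n) : (a⁻¹).t = -a.t := rfl

lemma symp_self (u : (Fin n → F) × (Fin n → F)) : symp u u = 0 := by
  simp [symp, dotProduct_comm]

instance : Group (Heis F n) where
  mul_assoc a b c := by
    refine Heis.ext ?_ ?_
    · simp [mul_w, add_assoc]
    · simp only [mul_t, mul_w, symp, Prod.fst_add, Prod.snd_add,
        add_dotProduct, dotProduct_add]
      ring
  one_mul a := by
    refine Heis.ext ?_ ?_
    · simp [mul_w, one_w]
    · simp [mul_t, one_w, one_t, symp]
  mul_one a := by
    refine Heis.ext ?_ ?_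
    · simp [mul_w, one_w]
    · simp [mul_t, one_w, one_t, symp]
  inv_mul_cancel a := by
    refine Heis.ext ?_ ?_
    · simp [mul_w, inv_w, one_w]
    · have h : symp (-a.w) a.w = 0 := by
        simp only [symp, Prod.fst_neg, Prod.snd_neg, neg_dotProduct]
        rw [dotProduct_comm]
        ring
      simp [mul_t, inv_w, inv_t, one_t, h]

end Heis

/-- A representation `ρ` of the Heisenberg group has central character `χ` if
the central element `(0,t)` acts by the scalar `χ t`. -/
def HasCentralChar {F : Type} [Field F] {n : ℕ} {V : Type} [AddCommGroup V] [Module ℂ V]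
    (ρ : Representation ℂ (Heis F n) V) (χ : AddChar F ℂ) : Prop :=
  ∀ t : F, ∀ v : V, ρ ⟨0, t⟩ v = χ t • v

/-- Irreducibility of a representation: the space is nonzero, and the only
invariant subspaces are `⊥` and `⊤`. -/
def IsIrred {G : Type} [Group G] {V : Type} [AddCommGroup V] [Module ℂ V]
    (ρ : Representation ℂ G V) : Prop :=
  (∃ v : V, v ≠ 0) ∧
    ∀ p : Submodule ℂ V, (∀ g : G, ∀ v ∈ p, ρ g v ∈ p) → p = ⊥ ∨ p = ⊤

variable {F : Type} [Field F] {n : ℕ}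

/-- The subspace of vectors fixed by all `ρ(l,0)`, `l ∈ L`. -/
def fixedByLag {V : Type} [AddCommGroup V] [Module ℂ V]
    (ρ : Representation ℂ (Heis F n) V)
    (L : Submodule F ((Fin n → F) × (Fin n → F))) : Submodule ℂ V where
  carrier := {v | ∀ l ∈ L, ρ ⟨l, 0⟩ v = v}
  add_mem' := by
    intro a b ha hb l hl
    rw [_root_.map_add, ha l hl, hb l hl]
  zero_mem' := by intro l hl; simp
  smul_mem' := by
    intro c v hv l hl
    rw [_root_.map_smul, hv l hl]

lemma eq_zero_of_eq_smul_of_ne_one {K M : Type*} [DivisionRing K] [AddCommGroup M] [Module K M]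
    {c : K} {x : M} (h : x = c • x) (hc : c ≠ 1) : x = 0 := by
  have : (c - 1) • x = 0 := by rw [sub_smul, one_smul, ← h, sub_self]
  exact (smul_eq_zero.mp this).resolve_left (sub_ne_zero.mpr hc)

lemma AddChar.exists_apply_mul_ne_one {K M : Type*} [Field K] [CommMonoid M] {χ : AddChar K M}
    (hχ : χ ≠ 1) {a : K} (ha : a ≠ 0) : ∃ c : K, χ (c * a) ≠ 1 := by
  obtain ⟨c, hc⟩ := DFunLike.ne_iff.mp (AddChar.IsPrimitive.of_ne_one hχ ha)
  exact ⟨c, by rwa [AddChar.mulShift_apply, mul_comm] at hc⟩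

lemma Representation.averageMap_mul {k G V : Type*} [CommRing k] [Group G] [AddCommGroup V]
    [Module k V] (ρ : Representation k G V) [Fintype G] [Invertible (Fintype.card G : k)]
    (g : G) : ρ.averageMap * ρ g = ρ.averageMap := by
  rw [Representation.averageMap, ← Representation.asAlgebraHom_single_one, ← map_mul,
    GroupAlgebra.mul_average_right]

lemma IsIrred.span_orbit_eq_top {G V : Type} [Group G] [AddCommGroup V] [Module ℂ V]
    {ρ : Representation ℂ G V} (hirr : IsIrred ρ) {v : V} (hv : v ≠ 0) :
    Submodule.span ℂ (Set.range fun g => ρ g v) = ⊤ := by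
  set U := Submodule.span ℂ (Set.range fun g => ρ g v)
  have hinv : ∀ g, U ≤ U.comap (ρ g) := fun g => Submodule.span_le.mpr <| by
    rintro _ ⟨h, rfl⟩
    exact Submodule.subset_span ⟨g * h, by simp⟩
  refine (hirr.2 U fun g x hx => hinv g hx).resolve_left fun hbot => hv ?_
  have hvU : v ∈ U := Submodule.subset_span ⟨1, by simp⟩
  rwa [hbot, Submodule.mem_bot] at hvU

section Symplectic

def sympBilin (F : Type) [Field F] (n : ℕ) :
    LinearMap.BilinForm F ((Fin n → F) × (Fin n → F)) :=
  LinearMap.mk₂ F symp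
    (by intros; simp only [symp, Prod.fst_add, Prod.snd_add, add_dotProduct]; ring)
    (by intros; simp only [symp, Prod.smul_fst, Prod.smul_snd, smul_dotProduct, smul_eq_mul]; ring)
    (by intros; simp only [symp, Prod.fst_add, Prod.snd_add, dotProduct_add]; ring)
    (by intros; simp only [symp, Prod.smul_fst, Prod.smul_snd, dotProduct_smul, smul_eq_mul]; ring)

lemma symp_anticomm (u v : (Fin n → F) × (Fin n → F)) : symp v u = -symp u v := by
  simp only [symp, dotProduct_comm v.1, dotProduct_comm v.2]
  ring

lemma symp_smul_left (c : F) (u v : (Fin n → F) × (Fin n → F)) :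
    symp (c • u) v = c * symp u v :=
  (sympBilin F n).map_smul₂ c u v

lemma sympBilin_isRefl : LinearMap.IsRefl (sympBilin F n) := fun u v h => by
  change symp v u = 0
  rw [symp_anticomm, show symp u v = 0 from h, neg_zero]

lemma sympBilin_nondegenerate : (sympBilin F n).Nondegenerate := by
  refine sympBilin_isRefl.nondegenerate_iff_separatingLeft.mpr fun u hu => ?_
  ext i
  · simpa [sympBilin, symp, dotProduct_single] using hu (0, Pi.single i 1)
  · simpa [sympBilin, symp, single_dotProduct] using hu (Pi.single i 1, 0)

lemma exists_symp_ne_zero {w : (Fin n → F) × (Fin n → F)} (hw : w ≠ 0) :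
    ∃ u, symp u w ≠ 0 := by
  by_contra! h
  exact hw (sympBilin_nondegenerate.2 w h)

lemma orthogonal_sympBilin_eq_self {L : Submodule F ((Fin n → F) × (Fin n → F))}
    (hLdim : Module.finrank F L = n) (hLiso : ∀ u ∈ L, ∀ v ∈ L, symp u v = 0) :
    (sympBilin F n).orthogonal L = L := by
  have hle : L ≤ (sympBilin F n).orthogonal L := fun v hv u hu => hLiso u hu v hv
  refine (Submodule.eq_of_le_of_finrank_le hle ?_).symm
  rw [LinearMap.BilinForm.finrank_orthogonal sympBilin_nondegenerate, hLdim,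
    Module.finrank_prod, Module.finrank_fin_fun]
  omega

lemma exists_mem_symp_ne_zero_of_notMem {L : Submodule F ((Fin n → F) × (Fin n → F))}
    (hLdim : Module.finrank F L = n) (hLiso : ∀ u ∈ L, ∀ v ∈ L, symp u v = 0)
    {w : (Fin n → F) × (Fin n → F)} (hw : w ∉ L) : ∃ l ∈ L, symp l w ≠ 0 := by
  by_contra! h
  exact hw (orthogonal_sympBilin_eq_self hLdim hLiso ▸ h)

lemma exists_mem_addChar_symp_ne_one {χ : AddChar F ℂ} (hχ : χ ≠ 1)
    {S : Submodule F ((Fin n → F) × (Fin n → F))} {w : (Fin n → F) × (Fin n → F)}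
    (h : ∃ u ∈ S, symp u w ≠ 0) : ∃ u ∈ S, χ (symp u w) ≠ 1 := by
  obtain ⟨u, hu, huw⟩ := h
  obtain ⟨c, hc⟩ := AddChar.exists_apply_mul_ne_one hχ huw
  exact ⟨c • u, S.smul_mem c hu, by rwa [symp_smul_left]⟩

end Symplectic

namespace Heis

lemma central_mul (s : F) (g : Heis F n) : (⟨0, s⟩ : Heis F n) * g = ⟨g.w, s + g.t⟩ := by
  refine Heis.ext (zero_add g.w) ?_
  simp [mul_t, symp]

lemma mk_zero_mul (h2 : (2 : F) ≠ 0) (l : (Fin n → F) × (Fin n → F)) (g : Heis F n) :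
    (⟨l, 0⟩ : Heis F n) * g = ⟨0, symp l g.w⟩ * (g * ⟨l, 0⟩) := by
  rw [central_mul]
  refine Heis.ext (add_comm l g.w) ?_
  simp only [mul_t, symp_anticomm l g.w]
  field_simp
  ring

lemma mk_zero_mul_mk_zero {a b : (Fin n → F) × (Fin n → F)} (h : symp a b = 0) :
    (⟨a, 0⟩ : Heis F n) * ⟨b, 0⟩ = ⟨a + b, 0⟩ := by
  refine Heis.ext rfl ?_
  simp [mul_t, h]

def ofIsotropic (L : Submodule F ((Fin n → F) × (Fin n → F)))
    (hLiso : ∀ u ∈ L, ∀ v ∈ L, symp u v = 0) : Multiplicative L →* Heis F n where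
  toFun l := ⟨l.toAdd, 0⟩
  map_one' := rfl
  map_mul' a b := (mk_zero_mul_mk_zero (hLiso _ a.toAdd.2 _ b.toAdd.2)).symm

end Heis

section Representation

variable {V : Type} [AddCommGroup V] [Module ℂ V] {ρ : Representation ℂ (Heis F n) V}
  {χ : AddChar F ℂ}

lemma HasCentralChar.apply_central_mul (hcc : HasCentralChar ρ χ) (s : F) (g : Heis F n) :
    ρ (⟨0, s⟩ * g) = χ s • ρ g := by
  ext v
  rw [map_mul, Module.End.mul_apply, hcc]
  rfl

lemma HasCentralChar.apply_eq_smul_of_mem_fixedByLag (hcc : HasCentralChar ρ χ)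
    {L : Submodule F ((Fin n → F) × (Fin n → F))} {v : V} (hv : v ∈ fixedByLag ρ L)
    {g : Heis F n} (hg : g.w ∈ L) : ρ g v = χ g.t • v := by
  calc ρ g v = ρ (⟨0, g.t⟩ * ⟨g.w, 0⟩) v := by rw [Heis.central_mul, add_zero]
    _ = χ g.t • v := by rw [hcc.apply_central_mul, LinearMap.smul_apply, hv g.w hg]

lemma HasCentralChar.apply_mk_zero_mul_apply (hcc : HasCentralChar ρ χ) (h2 : (2 : F) ≠ 0)
    (l : (Fin n → F) × (Fin n → F)) (g : Heis F n) :
    ρ ⟨l, 0⟩ * ρ g = χ (symp l g.w) • (ρ g * ρ ⟨l, 0⟩) := by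
  rw [← map_mul, Heis.mk_zero_mul h2, hcc.apply_central_mul, map_mul]

lemma HasCentralChar.character_eq_zero [FiniteDimensional ℂ V] (hcc : HasCentralChar ρ χ)
    (hχ : χ ≠ 1) (h2 : (2 : F) ≠ 0) {g : Heis F n} (hg : g.w ≠ 0) : ρ.character g = 0 := by
  obtain ⟨u, -, hu⟩ :=
    exists_mem_addChar_symp_ne_one hχ (S := ⊤) (by simpa using exists_symp_ne_zero hg)
  have hconj := ρ.char_conj g ⟨u, 0⟩
  rw [Heis.mk_zero_mul h2, ← mul_assoc, mul_inv_cancel_right, Representation.character,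
    hcc.apply_central_mul, map_smul] at hconj
  exact eq_zero_of_eq_smul_of_ne_one hconj.symm hu

lemma HasCentralChar.apply_apply_eq_zero_of_exists_symp_ne_zero (hcc : HasCentralChar ρ χ)
    (hχ : χ ≠ 1) (h2 : (2 : F) ≠ 0) {L : Submodule F ((Fin n → F) × (Fin n → F))}
    {P : Module.End ℂ V} (hP : ∀ l ∈ L, P * ρ ⟨l, 0⟩ = P) {v : V} (hv : v ∈ fixedByLag ρ L)
    {g : Heis F n} (hg : ∃ l ∈ L, symp l g.w ≠ 0) : P (ρ g v) = 0 := by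
  obtain ⟨l, hl, hχl⟩ := exists_mem_addChar_symp_ne_one hχ hg
  refine eq_zero_of_eq_smul_of_ne_one ?_ hχl
  calc P (ρ g v) = (P * ρ ⟨l, 0⟩ * ρ g) v := by rw [hP l hl]; rfl
    _ = P (χ (symp l g.w) • ρ g (ρ ⟨l, 0⟩ v)) := by
      rw [mul_assoc, hcc.apply_mk_zero_mul_apply h2]; rfl
    _ = χ (symp l g.w) • P (ρ g v) := by rw [hv l hl, map_smul]

variable {L : Submodule F ((Fin n → F) × (Fin n → F))}

lemma fixedByLag_eq_invariants (hLiso : ∀ u ∈ L, ∀ v ∈ L, symp u v = 0) :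
    fixedByLag ρ L = Representation.invariants (ρ.comp (Heis.ofIsotropic L hLiso)) := by
  ext v
  exact ⟨fun hv l => hv _ l.toAdd.2, fun hv l hl => hv (.ofAdd ⟨l, hl⟩)⟩

lemma fixedByLag_ne_bot [Fintype F] [FiniteDimensional ℂ V] [Nontrivial V]
    (hcc : HasCentralChar ρ χ) (hχ : χ ≠ 1) (h2 : (2 : F) ≠ 0)
    (hLiso : ∀ u ∈ L, ∀ v ∈ L, symp u v = 0) :
    fixedByLag ρ L ≠ ⊥ := by
  classical
  set ρL : Representation ℂ (Multiplicative L) V := ρ.comp (Heis.ofIsotropic L hLiso)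
  have hcard : (Nat.card (Multiplicative L) : ℂ) ≠ 0 := Nat.cast_ne_zero.mpr Nat.card_pos.ne'
  have := invertibleOfNonzero hcard
  have hsum : ∑ g, ρL.character g = Module.finrank ℂ V := by
    rw [Finset.sum_eq_single 1 ?_ (by simp), ρL.char_one]
    intro g _ hg
    exact hcc.character_eq_zero hχ h2 fun h => hg (toAdd_eq_zero.mp (Subtype.ext h))
  have hfinrank := ρL.card_inv_mul_sum_char_eq_finrank
  rw [hsum, ← fixedByLag_eq_invariants] at hfinrank
  intro hbot
  rw [hbot, finrank_bot, Nat.cast_zero] at hfinrank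
  simp [Module.finrank_pos.ne'] at hfinrank

lemma fixedByLag_le_span_singleton [Fintype F] (hirr : IsIrred ρ) (hcc : HasCentralChar ρ χ)
    (hχ : χ ≠ 1) (h2 : (2 : F) ≠ 0) (hLdim : Module.finrank F L = n)
    (hLiso : ∀ u ∈ L, ∀ v ∈ L, symp u v = 0) {v₀ : V} (hv₀ : v₀ ∈ fixedByLag ρ L)
    (hv₀ne : v₀ ≠ 0) : fixedByLag ρ L ≤ ℂ ∙ v₀ := by
  classical
  set ρL : Representation ℂ (Multiplicative L) V := ρ.comp (Heis.ofIsotropic L hLiso)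
  have := invertibleOfNonzero
    (Nat.cast_ne_zero (R := ℂ) |>.mpr (Fintype.card_ne_zero (α := Multiplicative L)))
  set P := Representation.averageMap ρL
  have hproj : LinearMap.IsProj (fixedByLag ρ L) P :=
    fixedByLag_eq_invariants (ρ := ρ) hLiso ▸ Representation.isProj_averageMap ρL
  have hPρ : ∀ g, P (ρ g v₀) ∈ ℂ ∙ v₀ := by
    intro g
    by_cases hg : g.w ∈ L
    · rw [hcc.apply_eq_smul_of_mem_fixedByLag hv₀ hg, map_smul, hproj.map_id v₀ hv₀]
      exact Submodule.smul_mem _ _ (Submodule.mem_span_singleton_self v₀)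
    · have hPL : ∀ l ∈ L, P * ρ ⟨l, 0⟩ = P := fun l hl =>
        Representation.averageMap_mul ρL (.ofAdd ⟨l, hl⟩)
      rw [hcc.apply_apply_eq_zero_of_exists_symp_ne_zero hχ h2 hPL hv₀
        (exists_mem_symp_ne_zero_of_notMem hLdim hLiso hg)]
      exact Submodule.zero_mem _
  have hrange : LinearMap.range P ≤ ℂ ∙ v₀ := by
    rw [LinearMap.range_eq_map, ← hirr.span_orbit_eq_top hv₀ne, Submodule.map_span,
      Submodule.span_le]
    rintro _ ⟨_, ⟨g, rfl⟩, rfl⟩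
    exact hPρ g
  intro v hv
  exact hproj.map_id v hv ▸ hrange (LinearMap.mem_range_self P v)

end Representation

/-- quantization of Lagrangians (cf. §7.1): for every
Lagrangian subspace `L` of `W`, the space of `L`-fixed vectors in the
irreducible representation `ρ_χ` is one-dimensional. -/
theorem lagrangian_fixed_space_one_dimensional
    (F : Type) [Field F] [Fintype F] (hodd : Odd (Fintype.card F))
    (n : ℕ) (χ : AddChar F ℂ) (hχ : χ ≠ 1)
    {V : Type} [AddCommGroup V] [Module ℂ V] [FiniteDimensional ℂ V]
    (ρ : Representation ℂ (Heis F n) V)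
    (hirr : IsIrred ρ) (hcc : HasCentralChar ρ χ)
    (L : Submodule F ((Fin n → F) × (Fin n → F)))
    (hLdim : Module.finrank F ↥L = n)
    (hLiso : ∀ u ∈ L, ∀ v ∈ L, symp u v = 0) :
    Module.finrank ℂ ↥(fixedByLag ρ L) = 1 := by
  have h2 : (2 : F) ≠ 0 := Ring.two_ne_zero fun hchar => by
    have := FiniteField.even_card_iff_char_two.mp hchar
    rw [Nat.odd_iff] at hodd
    omega
  obtain ⟨v, hv⟩ := hirr.1
  have : Nontrivial V := nontrivial_of_ne v 0 hv
  obtain ⟨v₀, hv₀, hv₀ne⟩ :=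
    Submodule.exists_mem_ne_zero_of_ne_bot (fixedByLag_ne_bot hcc hχ h2 hLiso)
  have hline : fixedByLag ρ L = ℂ ∙ v₀ :=
    le_antisymm (fixedByLag_le_span_singleton hirr hcc hχ h2 hLdim hLiso hv₀ hv₀ne)
      ((Submodule.span_singleton_le_iff_mem v₀ _).mpr hv₀)
  rw [hline, finrank_span_singleton hv₀ne]

end Stmt3
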